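/- If a nonnegative position sequence k has M maximal positive excursions of which M - ε are flippable (ε = 1 if the last excursion reaches depth D with k_D ≠ 0, else ε = 0), then the flip family {F_A(k) : A ⊆ flippable excursions} has exactly 2^{M-ε} elements, and distinct subsets A yield distinct sequences. -/
import Mathlib


/-- A depth-`D` path, indexed by `ℕ` (only the values at `d ≤ D` are constrained). -/
def IsPathN (D : ℕ) (k : ℕ → ℤ) : Prop :=
  k 0 = 0 ∧ ∀ d < D, k (d + 1) - k d ∈ ({-1, 0, 1} : Set ℤ)

/-- If a nonnegative position sequence `k` has `M` maximal positive excursions, of which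
`M - ε` are flippable (`ε = 1` iff the last excursion reaches depth `D` with `k_D ≠ 0`,
recorded by the sentinel `r = D + 1`), then the flip operator `A ↦ F_A(k)` is injective
on subsets of the flippable excursions, and the flip family has exactly `2^(M-ε)`
elements. -/
theorem flip_family_card (D M : ℕ) (k : ℕ → ℤ)
    (hpath : IsPathN D k) (hnn : ∀ d ≤ D, 0 ≤ k d)
    (l r : Fin M → ℕ)
    (hlr : ∀ m, l m + 1 < r m)
    (hrD : ∀ m, r m ≤ D + 1)
    (hl0 : ∀ m, k (l m) = 0)
    (hr0 : ∀ m, r m ≤ D → k (r m) = 0)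
    (hsent : ∀ m, r m = D + 1 → 0 < k D)
    (hpos : ∀ m, ∀ d, l m < d → d < r m → 0 < k d)
    (hcover : ∀ d ≤ D, 0 < k d → ∃! m, l m < d ∧ d < r m) :
    let flippable : Finset (Fin M) := Finset.univ.filter fun m => r m ≤ D
    let F : Finset (Fin M) → (ℕ → ℤ) := fun A d =>
      if ∃ m ∈ A, l m < d ∧ d < r m then -(k d) else k d
    let ε : ℕ := if 0 < k D then 1 else 0
    Set.InjOn F {A | A ⊆ flippable} ∧
    Nat.card (F '' {A | A ⊆ flippable}) = 2 ^ (M - ε) := by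
  intro flippable F ε
  have key : ∀ A B : Finset (Fin M), A ⊆ flippable → F A = F B → A ⊆ B := by
    intro A B hA hFB m hm
    set d := l m + 1 with hd
    have hrm : r m ≤ D := by simpa [flippable] using hA hm
    have hdr : d < r m := hlr m
    have hkd : 0 < k d := hpos m d (by omega) hdr
    have hdD : d ≤ D := by omega
    have hAneg : F A d = -(k d) := by
      simp only [F]; rw [if_pos ⟨m, hm, by omega, hdr⟩]
    have hBval : F B d = -(k d) := by rw [← congrFun hFB d, hAneg]
    have hex : ∃ m' ∈ B, l m' < d ∧ d < r m' := by
      by_contra h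
      simp only [F, if_neg h] at hBval
      omega
    obtain ⟨m', hm', hl', hr'⟩ := hex
    obtain ⟨m0, hm0, huniq⟩ := hcover d hdD hkd
    have h1 : m' = m0 := huniq m' ⟨hl', hr'⟩
    have h2 : m = m0 := huniq m ⟨by omega, hdr⟩
    rwa [h1, ← h2] at hm'
  have hinj : Set.InjOn F {A | A ⊆ flippable} := by
    intro A hA B hB hFB
    exact Finset.Subset.antisymm (key A B hA hFB) (key B A hB hFB.symm)
  have hε : (Finset.univ.filter fun m : Fin M => D < r m).card = ε := by
    by_cases hkD : 0 < k D
    · obtain ⟨m0, hm0, huniq⟩ := hcover D le_rfl hkD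
      have hone : (Finset.univ.filter fun m : Fin M => D < r m) = {m0} := by
        ext m
        simp only [Finset.mem_filter, Finset.mem_univ, true_and, Finset.mem_singleton]
        constructor
        · intro h
          exact huniq m ⟨by have := hlr m; have := hrD m; omega, h⟩
        · intro h; subst h
          have := hm0.2; omega
      simp [hone, ε, hkD]
    · have hemp : (Finset.univ.filter fun m : Fin M => D < r m) = ∅ := by
        ext m
        simp only [Finset.mem_filter, Finset.mem_univ, true_and,
          Finset.notMem_empty, iff_false]
        exact fun h => absurd (hsent m (by have := hrD m; omega)) hkD
      simp [hemp, ε, hkD]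
  have hcard : flippable.card = M - ε := by
    have hsplit := Finset.card_filter_add_card_filter_not
      (s := (Finset.univ : Finset (Fin M))) (p := fun m : Fin M => r m ≤ D)
    simp only [Finset.card_univ, Fintype.card_fin, not_le] at hsplit
    have : flippable.card + ε = M := by rw [← hε]; exact hsplit
    omega
  refine ⟨hinj, ?_⟩
  have hset : {A | A ⊆ flippable} = ↑flippable.powerset := by
    ext A; simp
  rw [Nat.card_coe_set_eq, Set.ncard_image_of_injOn hinj, hset,
    Set.ncard_coe_finset, Finset.card_powerset, hcard]
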